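/- arXiv:2106.00942 — 2 statements merged into one kernel-verified Lean document; each statement's English description precedes it below -/
import Mathlib

section
/- (Lemma 2, instantaneous regret of a UCB choice) Let χ be a nonempty set, let f, μ, σ : χ → ℝ with σ(x) ≥ 0 for all x, and let β ≥ 0. Suppose |f(x) − μ(x)| ≤ β^{1/2}·σ(x) for all x ∈ χ, and suppose x_t ∈ χ satisfies μ(x_t) + β^{1/2}·σ(x_t) ≥ μ(x) + β^{1/2}·σ(x) for all x ∈ χ. Then for every x* ∈ χ, f(x*) − f(x_t) ≤ 2·β^{1/2}·σ(x_t). -/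
theorem ucb_instantaneous_regret_general
    {χ : Type*}
    (f μ σ : χ → ℝ) (β : ℝ)
    (hconf : ∀ x, |f x - μ x| ≤ Real.sqrt β * σ x)
    (xt : χ)
    (hmax : ∀ x, μ x + Real.sqrt β * σ x ≤ μ xt + Real.sqrt β * σ xt) :
    ∀ xstar, f xstar - f xt ≤ 2 * Real.sqrt β * σ xt := by
  intro xstar
  have hf_le_ucb : f xstar ≤ μ xstar + Real.sqrt β * σ xstar :=
    sub_le_iff_le_add'.mp (abs_le.mp (hconf xstar)).2
  have hlcb_le_f : μ xt - Real.sqrt β * σ xt ≤ f xt := by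
    linarith [(abs_le.mp (hconf xt)).1]
  calc f xstar - f xt
      ≤ (μ xt + Real.sqrt β * σ xt) - (μ xt - Real.sqrt β * σ xt) :=
        sub_le_sub (hf_le_ucb.trans (hmax xstar)) hlcb_le_f
    _ = 2 * Real.sqrt β * σ xt := by ring

/-- (Lemma 2, instantaneous regret of a UCB choice) If `μ, σ` provide a valid
`β^{1/2}`-confidence envelope for `f` on `χ` and `xt` maximizes the upper confidence
bound `μ + β^{1/2}·σ` over `χ`, then the instantaneous regret `f(x*) − f(xt)` is
bounded by `2·β^{1/2}·σ(xt)`. -/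
theorem ucb_instantaneous_regret
    {χ : Type*} [Nonempty χ]
    (f μ σ : χ → ℝ) (β : ℝ) (hβ : 0 ≤ β)
    (hσ : ∀ x, 0 ≤ σ x)
    (hconf : ∀ x, |f x - μ x| ≤ Real.sqrt β * σ x)
    (xt : χ)
    (hmax : ∀ x, μ x + Real.sqrt β * σ x ≤ μ xt + Real.sqrt β * σ xt) :
    ∀ xstar, f xstar - f xt ≤ 2 * Real.sqrt β * σ xt :=
  ucb_instantaneous_regret_general f μ σ β hconf xt hmax
end

section
/- (Discretized UCB regret bound, deterministic core of Lemma 6) Let d ≥ 1, let χ ⊆ ℝ^d be nonempty, let f, μ, σ : χ → ℝ with σ(x) ≥ 0 for all x ∈ χ, and let β ≥ 0, L ≥ 0, ε ≥ 0. Let D ⊆ χ be a set such that for every x ∈ χ there exists y ∈ D with Σ_{j=1}^d |x_j − y_j| ≤ ε. Assume: (i) |f(x) − f(y)| ≤ L·Σ_{j=1}^d |x_j − y_j| for all x, y ∈ χ; (ii) |f(y) − μ(y)| ≤ β^{1/2}·σ(y) for all y ∈ D; (iii) x_t ∈ χ satisfies μ(x_t) + β^{1/2}·σ(x_t) ≥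 μ(x) + β^{1/2}·σ(x) for all x ∈ χ; and (iv) |f(x_t) − μ(x_t)| ≤ β^{1/2}·σ(x_t). Then for every x* ∈ χ, f(x*) − f(x_t) ≤ 2·β^{1/2}·σ(x_t) + L·ε. -/
/-!
Pick a point `y` of the covering `D` within `ℓ1`-distance `ε` of `xstar`. Lipschitz continuity
costs `L ε` in passing from `f xstar` to `f y`. Optimism then does the rest: confidence at `y`
gives `f y ≤ μ y + β^{1/2} σ y`, the UCB rule bounds this by `μ xt + β^{1/2} σ xt`, and
confidence at `xt` bounds that by `f xt + 2 β^{1/2} σ xt`.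
-/

theorem sub_le_two_mul_width_of_ucb_le {α : Type*} {f μ w : α → ℝ} {x xt : α}
    (hx : f x - μ x ≤ w x) (hmax : μ x + w x ≤ μ xt + w xt) (hxt : μ xt - f xt ≤ w xt) :
    f x - f xt ≤ 2 * w xt := by
  linarith

theorem sub_le_mul_of_abs_sub_le_mul {a b L δ ε : ℝ} (h : |a - b| ≤ L * δ) (hL : 0 ≤ L)
    (hδ : δ ≤ ε) : a - b ≤ L * ε :=
  (le_abs_self _).trans (h.trans (mul_le_mul_of_nonneg_left hδ hL))

open Finset in
theorem discretized_ucb_regret_general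
    (d : ℕ)
    (χ : Set (Fin d → ℝ))
    (f μ σ : (Fin d → ℝ) → ℝ)
    (β L ε : ℝ) (hL : 0 ≤ L)
    (D : Set (Fin d → ℝ)) (hD : D ⊆ χ)
    (hcover : ∀ x ∈ χ, ∃ y ∈ D, ∑ j, |x j - y j| ≤ ε)
    (hlip : ∀ x ∈ χ, ∀ y ∈ χ, |f x - f y| ≤ L * ∑ j, |x j - y j|)
    (hconfD : ∀ y ∈ D, |f y - μ y| ≤ Real.sqrt β * σ y)
    (xt : Fin d → ℝ)
    (hmax : ∀ x ∈ χ, μ x + Real.sqrt β * σ x ≤ μ xt + Real.sqrt β * σ xt)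
    (hconfxt : |f xt - μ xt| ≤ Real.sqrt β * σ xt) :
    ∀ xstar ∈ χ, f xstar - f xt ≤ 2 * Real.sqrt β * σ xt + L * ε := by
  intro xstar hxstar
  obtain ⟨y, hyD, hy⟩ := hcover xstar hxstar
  have hdisc : f xstar - f y ≤ L * ε :=
    sub_le_mul_of_abs_sub_le_mul (hlip xstar hxstar y (hD hyD)) hL hy
  have hopt : f y - f xt ≤ 2 * (Real.sqrt β * σ xt) :=
    sub_le_two_mul_width_of_ucb_le (w := fun x ↦ Real.sqrt β * σ x)
      (abs_sub_le_iff.mp (hconfD y hyD)).1 (hmax y (hD hyD)) (abs_sub_le_iff.mp hconfxt).2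
  linarith

open Finset in
/-- (Discretized UCB regret bound, deterministic core of Lemma 6) Confidence on a finite
ℓ1-covering `D` of covering radius `ε`, ℓ1-Lipschitz continuity of `f` with constant `L`,
and confidence at the UCB-maximizing query `xt` together bound the instantaneous regret
by `2·β^{1/2}·σ(xt) + L·ε`. -/
theorem discretized_ucb_regret
    (d : ℕ) (hd : 1 ≤ d)
    (χ : Set (Fin d → ℝ)) (hχ : χ.Nonempty)
    (f μ σ : (Fin d → ℝ) → ℝ)
    (hσ : ∀ x ∈ χ, 0 ≤ σ x)
    (β L ε : ℝ) (hβ : 0 ≤ β) (hL : 0 ≤ L) (hε : 0 ≤ ε)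
    (D : Set (Fin d → ℝ)) (hD : D ⊆ χ)
    (hcover : ∀ x ∈ χ, ∃ y ∈ D, ∑ j, |x j - y j| ≤ ε)
    (hlip : ∀ x ∈ χ, ∀ y ∈ χ, |f x - f y| ≤ L * ∑ j, |x j - y j|)
    (hconfD : ∀ y ∈ D, |f y - μ y| ≤ Real.sqrt β * σ y)
    (xt : Fin d → ℝ) (hxt : xt ∈ χ)
    (hmax : ∀ x ∈ χ, μ x + Real.sqrt β * σ x ≤ μ xt + Real.sqrt β * σ xt)
    (hconfxt : |f xt - μ xt| ≤ Real.sqrt β * σ xt) :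
    ∀ xstar ∈ χ, f xstar - f xt ≤ 2 * Real.sqrt β * σ xt + L * ε :=
  discretized_ucb_regret_general d χ f μ σ β L ε hL D hD hcover hlip hconfD xt hmax hconfxt
end
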